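/- arXiv:1801.04896 — 2 statements merged into one kernel-verified Lean document; each statement's English description precedes it below -/
import Mathlib

section
/- Every element of the Λ-convex hull K^Λ of the 3D MHD constraint set satisfies a·b = 0. In particular, K^Λ has empty interior in ℝ³ × ℝ³ × Sym(3) × ℝ³. -/
open Matrix

/-- The 3D state space in the variables `(u, b, S, a)`. -/
abbrev MHD3State :=
  (Fin 3 → ℝ) × (Fin 3 → ℝ) × Matrix (Fin 3) (Fin 3) ℝ × (Fin 3 → ℝ)

/-- The 3D MHD wave cone in the variables `(u, b, S, a)` with `S` symmetric. -/
def Lambda3 : Set MHD3State :=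
  {p | p.2.2.1.IsSymm ∧ ∃ ξ : Fin 3 → ℝ, ξ ≠ 0 ∧ ∃ c : ℝ,
    p.2.2.1 *ᵥ ξ + c • p.1 = 0 ∧ crossProduct ξ p.2.2.2 + c • p.2.1 = 0 ∧
    p.1 ⬝ᵥ ξ = 0 ∧ p.2.1 ⬝ᵥ ξ = 0}

/-- The 3D MHD constraint set `K`:
`S = u⊗u − b⊗b + ΠI` and `a = b × u`. -/
def K3 : Set MHD3State :=
  {p | (∃ Pi0 : ℝ, p.2.2.1 = vecMulVec p.1 p.1 - vecMulVec p.2.1 p.2.1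
          + Pi0 • (1 : Matrix (Fin 3) (Fin 3) ℝ)) ∧
       p.2.2.2 = crossProduct p.2.1 p.1}

/-- `Λ`-convexity of a function on the 3D state space. -/
def LambdaConvex3 (f : MHD3State → ℝ) : Prop :=
  ∀ V : MHD3State, ∀ W ∈ Lambda3, ConvexOn ℝ (Set.univ : Set ℝ) fun t : ℝ => f (V + t • W)

/-- The `Λ`-convex hull of `K`. -/
def K3LambdaHull : Set MHD3State :=
  {p | ∀ f : MHD3State → ℝ, LambdaConvex3 f → (∀ q ∈ K3, f q ≤ 0) → f p ≤ 0}


/-!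
The cross pairing `Q = a ⬝ᵥ b` is `Λ`-affine: on the wave cone, `ξ × a = -c b` and `b ⬝ᵥ ξ = 0`
give `(a ⬝ᵥ b) ξ = b × (ξ × a) = 0`, so `Q W = 0` and `Q` is affine along every wave line.
Hence `Q` and `-Q` are `Λ`-convex, and as both vanish on `K` (where `a = b × u ⟂ b`), `Q`
vanishes on the hull. The zero set of `Q` has empty interior, since along the direction
`(0, 1, 0, 1)` the second difference of `Q` is `6 t² ≠ 0`.
-/

open Topology

def Q3 (p : MHD3State) : ℝ := p.2.2.2 ⬝ᵥ p.2.1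

lemma dotProduct_eq_zero_of_cross_add_smul_eq_zero {R : Type*} [CommRing R] [IsDomain R]
    {ξ a b : Fin 3 → R} {c : R} (hξ : ξ ≠ 0) (h : ξ ⨯₃ a + c • b = 0) (hb : b ⬝ᵥ ξ = 0) :
    a ⬝ᵥ b = 0 := by
  have hcross : ξ ⨯₃ a = -c • b := by rw [neg_smul]; exact eq_neg_of_add_eq_zero_left h
  have hba : (b ⬝ᵥ a) • ξ = 0 := by
    have := cross_cross_eq_smul_sub_smul' b ξ a
    rwa [hcross, dotProduct_comm ξ b, hb, zero_smul, sub_zero, map_smul, cross_self, smul_zero,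
      eq_comm] at this
  rw [dotProduct_comm]
  exact (smul_eq_zero.mp hba).resolve_right hξ

lemma Q3_eq_zero_of_mem_Lambda3 {W : MHD3State} (hW : W ∈ Lambda3) : Q3 W = 0 := by
  obtain ⟨-, ξ, hξ, c, -, hcross, -, hb⟩ := hW
  exact dotProduct_eq_zero_of_cross_add_smul_eq_zero hξ hcross hb

lemma Q3_eq_zero_of_mem_K3 {q : MHD3State} (hq : q ∈ K3) : Q3 q = 0 := by
  rw [Q3, hq.2, dotProduct_comm]
  exact dot_self_cross _ _

lemma Q3_add_smul (V W : MHD3State) (t : ℝ) :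
    Q3 (V + t • W) = Q3 V + (V.2.2.2 ⬝ᵥ W.2.1 + W.2.2.2 ⬝ᵥ V.2.1) * t + Q3 W * t ^ 2 := by
  simp only [Q3, Prod.fst_add, Prod.snd_add, Prod.smul_fst, Prod.smul_snd, add_dotProduct,
    dotProduct_add, smul_dotProduct, dotProduct_smul, smul_eq_mul]
  ring

lemma lambdaConvex3_of_affine_on_wave_lines {f : MHD3State → ℝ}
    (hf : ∀ V, ∀ W ∈ Lambda3, ∃ α β : ℝ, ∀ t : ℝ, f (V + t • W) = α + β * t) :
    LambdaConvex3 f := by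
  intro V W hW
  obtain ⟨α, β, hαβ⟩ := hf V W hW
  rw [show (fun t : ℝ => f (V + t • W)) = fun t => α + β * t from funext hαβ]
  exact (convexOn_const α convex_univ).add ((LinearMap.mulLeft ℝ β).convexOn convex_univ)

lemma eq_zero_of_mem_K3LambdaHull_of_affine_on_wave_lines {f : MHD3State → ℝ}
    (hf : ∀ V, ∀ W ∈ Lambda3, ∃ α β : ℝ, ∀ t : ℝ, f (V + t • W) = α + β * t)
    (hK : ∀ q ∈ K3, f q = 0) {p : MHD3State} (hp : p ∈ K3LambdaHull) : f p = 0 := by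
  have hneg : ∀ V, ∀ W ∈ Lambda3, ∃ α β : ℝ, ∀ t : ℝ, -f (V + t • W) = α + β * t := by
    intro V W hW
    obtain ⟨α, β, hαβ⟩ := hf V W hW
    exact ⟨-α, -β, fun t => by rw [hαβ]; ring⟩
  have hle := hp f (lambdaConvex3_of_affine_on_wave_lines hf) fun q hq => (hK q hq).le
  have hge := hp (fun q => -f q) (lambdaConvex3_of_affine_on_wave_lines hneg)
    fun q hq => by simp [hK q hq]
  linarith

lemma Q3_eq_zero_of_mem_K3LambdaHull {p : MHD3State} (hp : p ∈ K3LambdaHull) : Q3 p = 0 := by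
  refine eq_zero_of_mem_K3LambdaHull_of_affine_on_wave_lines (fun V W hW => ?_)
    (fun q hq => Q3_eq_zero_of_mem_K3 hq) hp
  exact ⟨_, _, fun t => by rw [Q3_add_smul, Q3_eq_zero_of_mem_Lambda3 hW, zero_mul, add_zero]⟩

lemma interior_setOf_Q3_eq_zero : interior {p : MHD3State | Q3 p = 0} = ∅ := by
  refine Set.eq_empty_iff_forall_notMem.mpr fun x hx => ?_
  set w : MHD3State := (0, 1, 0, 1)
  have hw : Q3 w = 3 := by simp [w, Q3, dotProduct]
  have hline : ∀ᶠ t in 𝓝 (0 : ℝ), Q3 (x + t • w) = 0 := by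
    have hc : Continuous fun t : ℝ => x + t • w := by fun_prop
    exact (hc.continuousAt (x := 0)).eventually_mem (s := {p | Q3 p = 0})
      (by simpa using mem_interior_iff_mem_nhds.mp hx)
  have hline' : ∀ᶠ t in 𝓝 (0 : ℝ), Q3 (x + (-t) • w) = 0 :=
    (continuous_neg.tendsto' 0 0 neg_zero).eventually hline
  obtain ⟨t, ⟨hplus, hminus⟩, ht⟩ :=
    ((hline.and hline').filter_mono nhdsWithin_le_nhds |>.and self_mem_nhdsWithin).exists
      (f := 𝓝[≠] (0 : ℝ))
  have hx0 : Q3 x = 0 := (interior_subset hx : x ∈ {p : MHD3State | Q3 p = 0})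
  rw [Q3_add_smul, hw] at hplus hminus
  have : t ^ 2 = 0 := by linear_combination (hplus + hminus - 2 * hx0) / 6
  exact ht (pow_eq_zero_iff two_ne_zero |>.mp this)

/-- Every element of the 3D `Λ`-convex hull satisfies `a·b = 0`; in
particular the hull has empty interior. -/
theorem stmt11 :
    (∀ p ∈ K3LambdaHull, p.2.2.2 ⬝ᵥ p.2.1 = 0) ∧
    interior K3LambdaHull = ∅ := by
  have hhull : K3LambdaHull ⊆ {p | Q3 p = 0} := fun _ => Q3_eq_zero_of_mem_K3LambdaHull
  exact ⟨hhull, Set.eq_empty_of_subset_empty (interior_setOf_Q3_eq_zero ▸ interior_mono hhull)⟩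
end

section
/- Let r, s > 0. If α, β ∈ ℝ³ satisfy |α| ≤ r and |β| ≤ s, and |Π| ≤ rs, then the point (α, β, α⊗β + ΠI) lies in the second lamination K^{2,Λ}_{r,s} of the normalized constraint set K_{r,s}. -/
open Matrix

/-- The 3D Elsässer state space: `(z⁺, z⁻, M)`. -/
abbrev MHD3EState := (Fin 3 → ℝ) × (Fin 3 → ℝ) × Matrix (Fin 3) (Fin 3) ℝ

/-- The 3D MHD wave cone (Elsässer variables). -/
def Lambda3E : Set MHD3EState :=
  {p | ∃ ξ : Fin 3 → ℝ, ξ ≠ 0 ∧ ∃ c : ℝ,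
    p.2.2 *ᵥ ξ + c • p.1 = 0 ∧ p.2.2ᵀ *ᵥ ξ + c • p.2.1 = 0 ∧
    p.1 ⬝ᵥ ξ = 0 ∧ p.2.1 ⬝ᵥ ξ = 0}

/-- The Euclidean length of a vector in `ℝ³`. -/
noncomputable def elen (v : Fin 3 → ℝ) : ℝ := Real.sqrt (v ⬝ᵥ v)

/-- The normalized constraint set `K_{r,s}`. -/
def Krs (r s : ℝ) : Set MHD3EState :=
  {p | elen p.1 = r ∧ elen p.2.1 = s ∧ ∃ Pi0 : ℝ, |Pi0| ≤ r * s ∧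
    p.2.2 = vecMulVec p.1 p.2.1 + Pi0 • (1 : Matrix (Fin 3) (Fin 3) ℝ)}

/-- The iterated laminates `K^{N,Λ}_{r,s}`. -/
def lamIterRS (r s : ℝ) : ℕ → Set MHD3EState
  | 0 => Krs r s
  | N + 1 => lamIterRS r s N ∪
      {p | ∃ l : ℝ, l ∈ Set.Icc (0 : ℝ) 1 ∧ ∃ V ∈ lamIterRS r s N, ∃ W ∈ lamIterRS r s N,
        V - W ∈ Lambda3E ∧ p = l • V + (1 - l) • W}

/-!
Write `α = t • w` with `elen w = r` and `|t| ≤ 1`, so that `α` is a convex combination of `w` and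
`-w`. Since `(α, β, α ⊗ β + Π I)` depends affinely on `α`, it is the same convex combination of the
states at `w` and `-w`, whose difference `(2w, 0, 2w ⊗ β)` lies in the wave cone (take `ξ ⊥ w, β`
and `c = 0`). Splitting `β = t' • v` with `elen v = s` in the same way puts each of these two states
in the first laminate, as a combination of two points of `K_{r,s}` differing by `(0, 2v, ±w ⊗ 2v)`.
-/

lemma elen_smul (a : ℝ) (v : Fin 3 → ℝ) : elen (a • v) = |a| * elen v := by
  rw [elen, elen, smul_dotProduct, dotProduct_smul, smul_eq_mul, smul_eq_mul, ← mul_assoc,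
    Real.sqrt_mul (mul_self_nonneg a), Real.sqrt_mul_self_eq_abs]

lemma elen_neg (v : Fin 3 → ℝ) : elen (-v) = elen v := by
  rw [elen, elen, neg_dotProduct, dotProduct_neg, neg_neg]

lemma elen_pos {v : Fin 3 → ℝ} (hv : v ≠ 0) : 0 < elen v :=
  Real.sqrt_pos.mpr <|
    (dotProduct_self_star_nonneg v).lt_of_ne' (dotProduct_self_eq_zero.not.mpr hv)

lemma exists_elen_eq_smul {v : Fin 3 → ℝ} {s : ℝ} (hv : elen v ≤ s) :
    ∃ w, elen w = s ∧ ∃ t : ℝ, |t| ≤ 1 ∧ v = t • w := by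
  rcases eq_or_ne v 0 with rfl | hv0
  · have hs : 0 ≤ s := (Real.sqrt_nonneg _).trans hv
    refine ⟨s • Pi.single 0 1, ?_, 0, by simp, by simp⟩
    simp [elen, dotProduct, Fin.sum_univ_three, Real.sqrt_mul_self hs]
  · have hpos := elen_pos hv0
    have hs : 0 < s := hpos.trans_le hv
    refine ⟨(s / elen v) • v, ?_, elen v / s, ?_, ?_⟩
    · rw [elen_smul, abs_of_pos (by positivity), div_mul_cancel₀ _ hpos.ne']
    · rw [abs_of_pos (by positivity), div_le_one hs]; exact hv
    · rw [smul_smul, div_mul_div_cancel₀ hs.ne', div_self hpos.ne', one_smul]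

lemma exists_mem_Icc_smul_eq_smul_add_smul_neg {E : Type*} [AddCommGroup E] [Module ℝ E]
    {t : ℝ} (ht : |t| ≤ 1) (w : E) : ∃ l ∈ Set.Icc (0 : ℝ) 1, t • w = l • w + (1 - l) • -w := by
  obtain ⟨ht₁, ht₂⟩ := abs_le.mp ht
  refine ⟨(1 + t) / 2, ⟨by linarith, by linarith⟩, ?_⟩
  module

lemma exists_ne_zero_dotProduct_eq_zero_of_two_lt {K : Type*} [Field K] {n : ℕ} (hn : 2 < n)
    (u v : Fin n → K) : ∃ ξ ≠ 0, u ⬝ᵥ ξ = 0 ∧ v ⬝ᵥ ξ = 0 := by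
  have hker : LinearMap.ker (Matrix.mulVecLin ![u, v]) ≠ ⊥ :=
    LinearMap.ker_ne_bot_of_finrank_lt (by simpa using hn)
  obtain ⟨ξ, hξ, hξ0⟩ := Submodule.exists_mem_ne_zero_of_ne_bot hker
  have h : ![u, v] *ᵥ ξ = 0 := hξ
  exact ⟨ξ, hξ0, congrFun h 0, congrFun h 1⟩

lemma mk_smul_smul_vecMulVec_mem_Lambda3E (u v : Fin 3 → ℝ) (a b : ℝ) :
    ((a • u, b • v, vecMulVec u v) : MHD3EState) ∈ Lambda3E := by
  obtain ⟨ξ, hξ, huξ, hvξ⟩ := exists_ne_zero_dotProduct_eq_zero_of_two_lt (by norm_num) u v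
  refine ⟨ξ, hξ, 0, ?_, ?_, ?_, ?_⟩ <;>
    simp [vecMulVec_mulVec, transpose_vecMulVec, huξ, hvξ]

def tensorState (α β : Fin 3 → ℝ) (Pi0 : ℝ) : MHD3EState :=
  (α, β, vecMulVec α β + Pi0 • (1 : Matrix (Fin 3) (Fin 3) ℝ))

lemma tensorState_mem_Krs {r s : ℝ} {α β : Fin 3 → ℝ} {Pi0 : ℝ}
    (hα : elen α = r) (hβ : elen β = s) (hPi : |Pi0| ≤ r * s) :
    tensorState α β Pi0 ∈ Krs r s :=
  ⟨hα, hβ, Pi0, hPi, rfl⟩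

lemma tensorState_sub_tensorState_left (α α' β : Fin 3 → ℝ) (Pi0 : ℝ) :
    tensorState α β Pi0 - tensorState α' β Pi0 = (α - α', 0, vecMulVec (α - α') β) := by
  simp [tensorState, sub_vecMulVec]

lemma tensorState_sub_tensorState_right (α β β' : Fin 3 → ℝ) (Pi0 : ℝ) :
    tensorState α β Pi0 - tensorState α β' Pi0 = (0, β - β', vecMulVec α (β - β')) := by
  simp [tensorState, vecMulVec_sub]

lemma smul_tensorState_add_smul_tensorState_left (l : ℝ) (α α' β : Fin 3 → ℝ) (Pi0 : ℝ) :
    l • tensorState α β Pi0 + (1 - l) • tensorState α' β Pi0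
      = tensorState (l • α + (1 - l) • α') β Pi0 := by
  simp only [tensorState, Prod.smul_mk, Prod.mk_add_mk, add_vecMulVec, smul_vecMulVec]
  congr 2 <;> module

lemma smul_tensorState_add_smul_tensorState_right (l : ℝ) (α β β' : Fin 3 → ℝ) (Pi0 : ℝ) :
    l • tensorState α β Pi0 + (1 - l) • tensorState α β' Pi0
      = tensorState α (l • β + (1 - l) • β') Pi0 := by
  simp only [tensorState, Prod.smul_mk, Prod.mk_add_mk, vecMulVec_add, vecMulVec_smul]
  congr 2 <;> module

lemma smul_add_smul_mem_lamIterRS_succ {r s : ℝ} {N : ℕ} {V W : MHD3EState}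
    (hV : V ∈ lamIterRS r s N) (hW : W ∈ lamIterRS r s N) (hVW : V - W ∈ Lambda3E)
    {l : ℝ} (hl : l ∈ Set.Icc (0 : ℝ) 1) : l • V + (1 - l) • W ∈ lamIterRS r s (N + 1) :=
  Or.inr ⟨l, hl, V, hV, W, hW, hVW, rfl⟩

lemma tensorState_mem_lamIterRS_one {r s : ℝ} {α β : Fin 3 → ℝ} {Pi0 : ℝ}
    (hα : elen α = r) (hβ : elen β ≤ s) (hPi : |Pi0| ≤ r * s) :
    tensorState α β Pi0 ∈ lamIterRS r s 1 := by
  obtain ⟨w, hw, t, ht, rfl⟩ := exists_elen_eq_smul hβ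
  obtain ⟨l, hl, htw⟩ := exists_mem_Icc_smul_eq_smul_add_smul_neg ht w
  rw [htw, ← smul_tensorState_add_smul_tensorState_right]
  refine smul_add_smul_mem_lamIterRS_succ (tensorState_mem_Krs hα hw hPi)
    (tensorState_mem_Krs hα (by rwa [elen_neg]) hPi) ?_ hl
  rw [tensorState_sub_tensorState_right]
  simpa using mk_smul_smul_vecMulVec_mem_Lambda3E α (w - -w) 0 1

theorem stmt14_general (r s : ℝ) (α β : Fin 3 → ℝ) (Pi0 : ℝ)
    (hα : elen α ≤ r) (hβ : elen β ≤ s) (hPi : |Pi0| ≤ r * s) :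
    ((α, β, vecMulVec α β + Pi0 • (1 : Matrix (Fin 3) (Fin 3) ℝ)) : MHD3EState)
      ∈ lamIterRS r s 2 := by
  obtain ⟨w, hw, t, ht, rfl⟩ := exists_elen_eq_smul hα
  obtain ⟨l, hl, htw⟩ := exists_mem_Icc_smul_eq_smul_add_smul_neg ht w
  change tensorState (t • w) β Pi0 ∈ lamIterRS r s (1 + 1)
  rw [htw, ← smul_tensorState_add_smul_tensorState_left]
  refine smul_add_smul_mem_lamIterRS_succ (tensorState_mem_lamIterRS_one hw hβ hPi)
    (tensorState_mem_lamIterRS_one (by rwa [elen_neg]) hβ hPi) ?_ hl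
  rw [tensorState_sub_tensorState_left]
  simpa using mk_smul_smul_vecMulVec_mem_Lambda3E (w - -w) β 1 0

/-- If `|α| ≤ r`, `|β| ≤ s` and `|Π| ≤ rs`, then `(α, β, α⊗β + ΠI)` lies in
the second laminate `K^{2,Λ}_{r,s}`. -/
theorem stmt14 (r s : ℝ) (hr : 0 < r) (hs : 0 < s) (α β : Fin 3 → ℝ) (Pi0 : ℝ)
    (hα : elen α ≤ r) (hβ : elen β ≤ s) (hPi : |Pi0| ≤ r * s) :
    ((α, β, vecMulVec α β + Pi0 • (1 : Matrix (Fin 3) (Fin 3) ℝ)) : MHD3EState)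
      ∈ lamIterRS r s 2 :=
  stmt14_general r s α β Pi0 hα hβ hPi
end
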